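/- Let (p,p') be a pair of coprime positive integers with p ≥ 2 and p' ≥ 2, set a = p'/p, fix (r,s) ∈ K_{p,p'} and ε,ε' ∈ {0,1}, and set S_{r,s} = { λ_{r,s}, λ_{p−r,p'−s} } + ℤ. Then the family of functions ℍ×ℂ×ℂ → ℂ given by { (τ,u,t) ↦ T^{ε,ε'}_{r,s;x}(τ,u,t) : x ∈ ℝ + i(ℝ∖S_{r,s}) } is linearly independent over ℂ: every finite ℂ-linear combination of functions in this family with distinct indices x that vanishes identically has all coefficients zero. -/

import Mathlib

open Complex MeasureTheory
open scoped Real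

noncomputable section

/-- `e2 x = exp(2πi x)`. -/
def e2 (x : ℂ) : ℂ := Complex.exp (2 * (π : ℂ) * Complex.I * x)

/-- Dedekind dedekindEta function. -/
def dedekindEta (τ : ℂ) : ℂ := e2 (τ / 24) * ∏' n : ℕ, (1 - e2 (τ * (n + 1)))

/-- Jacobi theta with characteristics ε, ε' ∈ {0,1}. -/
def theta (ε ε' : ℕ) (u τ : ℂ) : ℂ :=
  e2 (u * ε / 2) * e2 (τ * ε / 8) *
    ∏' n : ℕ,
      ((1 - e2 (τ * (n + 1))) *
        (1 + (-1 : ℂ) ^ ε' * e2 u * e2 (τ * ((n + 1 : ℂ) - (1 - (ε : ℂ)) / 2))) *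
        (1 + (-1 : ℂ) ^ ε' * e2 (-u) * e2 (τ * ((n + 1 : ℂ) - (1 + (ε : ℂ)) / 2))))

/-- Normalized BPZ minimal-series character. -/
def chiBPZ (p p' r s : ℤ) (τ : ℂ) : ℂ :=
  (dedekindEta τ)⁻¹ * ∑' n : ℤ,
    (e2 (τ * ((p * p' : ℂ) * ((n : ℂ) + ((r * p' - s * p : ℤ) : ℂ) / (2 * p * p')) ^ 2)) -
     e2 (τ * ((p * p' : ℂ) * ((n : ℂ) + ((-r * p' - s * p : ℤ) : ℂ) / (2 * p * p')) ^ 2)))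

/-- The typical character function T^{ε,ε'}_{r,s;x}(τ,u,t). -/
def Tchar (p p' : ℤ) (ε ε' : ℕ) (r s : ℤ) (x : ℂ) (τ u t : ℂ) : ℂ :=
  (-1 : ℂ) ^ (ε * ε') *
    e2 (τ * (((p' : ℂ) / p) * (x - Complex.I * ε / 2) ^ 2)) *
    e2 (u * (2 * Complex.I * ((p' : ℂ) / p) * (x - Complex.I * ε / 2))) *
    e2 (t * (3 * (1 - 2 * ((p' : ℂ) / p)))) *
    theta ε ε' u τ / (dedekindEta τ) ^ 2 * chiBPZ p p' r s τ

/-- The index set K_{p,p'}. -/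
def Kset (p p' : ℤ) : Finset (ℤ × ℤ) :=
  (Finset.Icc 1 (p - 1) ×ˢ Finset.Icc 1 (p' - 1)).filter
    (fun rs => rs.1 * p' + rs.2 * p ≤ p * p')

/-- BPZ modular S-matrix. -/
def SBPZ (p p' r s r' s' : ℤ) : ℂ :=
  (Real.sqrt (8 / ((p : ℝ) * p')) : ℂ) * (-1 : ℂ) ^ ((r + s) * (r' + s')) *
    (Real.sin (π * ((p : ℝ) - p') * r * r' / p) : ℂ) *
    (Real.sin (π * ((p : ℝ) - p') * s * s' / p') : ℂ)

/-- Typical-typical modular S-data. -/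
def Stt (p p' : ℤ) (ε ε' : ℕ) (r s : ℤ) (x : ℂ) (r' s' : ℤ) (x' : ℂ) : ℂ :=
  Complex.I ^ (-((ε : ℤ) * ε')) * SBPZ p p' r s r' s' *
    (Real.sqrt (2 * ((p' : ℝ) / p)) : ℂ) *
    Complex.exp (-4 * (π : ℂ) * Complex.I * ((p' : ℂ) / p) *
      (x - Complex.I * ε / 2) * (x' - Complex.I * ε' / 2))


/-- λ_{r,s} = (r−1)/2 − sp/(2p'). -/
def lam (p p' r s : ℤ) : ℝ := ((r : ℝ) - 1) / 2 - (s : ℝ) * p / (2 * p')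

/-- S_{r,s} = {λ_{r,s}, λ_{p−r,p'−s}} + ℤ, as a subset of ℝ. -/
def SrsSet (p p' r s : ℤ) : Set ℝ :=
  {y | ∃ n : ℤ, y = lam p p' r s + n ∨ y = lam p p' (p - r) (p' - s) + n}


/-!
At `τ = i`, `t = 0` and real `u`, the function `T_x` factors as `k(x) · exp(λ_x u) · W(u)` with
`k(x) ≠ 0`, `λ_x = -4π a (x - iε/2)` and `W(u) = ϑ(u; i) χ_{r,s}(i) / η(i)²` independent of `x`.
For irrational `u`, `W(u) ≠ 0`. Every factor of the product for `ϑ(u; τ)` has the form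
`1 + ζ q^m` with `|ζ| = 1`, `m` real, so it can only vanish if `m = 0` and `ζ = -1`, i.e.
`e^{2πiu} = ±1`. And `η(i) χ_{r,s}(i)` is a positive real: with `α, β = (±rp' - sp)/(2pp')`,
in `∑ₙ (e^{-2π pp'(n+α)²} - e^{-2π pp'(n+β)²})` the exponents of the second series exceed `pp'α²`
by the integers `(np - r)(np' - s) ≥ max(1, |n|)`, so the `n = 0` term of the first series alone
dominates the second series. A vanishing combination of the `T_x` thus gives a combination of the
exponentials `u ↦ exp(λ_x u)` vanishing on the irrationals, hence on `ℝ`; since `x ↦ λ_x` is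
injective, Dedekind's independence of characters of `ℝ` forces all coefficients to vanish.
-/

lemma e2_add (z w : ℂ) : e2 (z + w) = e2 z * e2 w := by
  rw [e2, e2, e2, ← Complex.exp_add]; ring_nf

lemma norm_e2 (z : ℂ) : ‖e2 z‖ = Real.exp (-(2 * π * z.im)) := by
  simp [e2, Complex.norm_exp, Complex.mul_re]

lemma norm_e2_ofReal (u : ℝ) : ‖e2 u‖ = 1 := by simp [norm_e2]

lemma e2_I_mul_ofReal (c : ℝ) : e2 (I * c) = (Real.exp (-(2 * π * c)) : ℂ) := by
  rw [e2, Complex.ofReal_exp]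
  congr 1
  push_cast
  linear_combination (2 * (π : ℂ) * c) * I_sq

lemma dedekindEta_eq_eta : dedekindEta = ModularForm.eta := by
  ext τ
  rw [dedekindEta, ModularForm.eta]
  congr 1
  · simp only [e2, Function.Periodic.qParam]; push_cast; ring_nf
  · congr; funext n; rw [ModularForm.eta_q_eq_cexp, e2]; ring_nf

lemma dedekindEta_ne_zero {τ : ℂ} (hτ : 0 < τ.im) : dedekindEta τ ≠ 0 :=
  dedekindEta_eq_eta ▸ ModularForm.eta_ne_zero hτ

lemma summable_norm_e2_mul_nat_add {τ : ℂ} (hτ : 0 < τ.im) (b : ℝ) :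
    Summable fun n : ℕ => ‖e2 (τ * (n + b))‖ := by
  have hq : Real.exp (-(2 * π * τ.im)) < 1 := by
    rw [Real.exp_lt_one_iff, neg_lt_zero]; positivity
  refine ((summable_geometric_of_lt_one (Real.exp_pos _).le hq).mul_left
    (Real.exp (-(2 * π * (τ.im * b))))).congr fun n => ?_
  rw [norm_e2, ← Real.exp_nat_mul, ← Real.exp_add]
  congr 1
  simp only [mul_im, add_re, natCast_re, ofReal_re, add_im, natCast_im, ofReal_im]
  ring

lemma one_add_mul_e2_ne_zero {ζ τ : ℂ} {m : ℝ} (hτ : 0 < τ.im) (hζ : ‖ζ‖ = 1)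
    (h : m = 0 → 1 + ζ ≠ 0) : 1 + ζ * e2 (τ * m) ≠ 0 := by
  intro h₀
  have hnorm : ‖ζ * e2 (τ * m)‖ = 1 := by rw [eq_neg_of_add_eq_zero_right h₀, norm_neg, norm_one]
  rw [norm_mul, hζ, one_mul, norm_e2, Real.exp_eq_one_iff, mul_im, ofReal_im, ofReal_re,
    mul_zero, zero_add, neg_eq_zero] at hnorm
  have hm : m = 0 := by simpa [hτ.ne', Real.pi_ne_zero] using hnorm
  subst hm
  simp only [e2, ofReal_zero, mul_zero, exp_zero, mul_one] at h₀
  exact h rfl h₀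

lemma multipliable_one_add_mul_e2 {ζ τ : ℂ} (hτ : 0 < τ.im) (hζ : ‖ζ‖ = 1) (b : ℝ) :
    Multipliable fun n : ℕ => 1 + ζ * e2 (τ * (n + b)) :=
  multipliable_one_add_of_summable (by simpa [hζ] using summable_norm_e2_mul_nat_add hτ b)

lemma tprod_one_add_mul_e2_ne_zero {ζ τ : ℂ} (hτ : 0 < τ.im) (hζ : ‖ζ‖ = 1) {b : ℝ}
    (h : ∀ n : ℕ, (n + b : ℝ) = 0 → 1 + ζ ≠ 0) : ∏' n : ℕ, (1 + ζ * e2 (τ * (n + b))) ≠ 0 := by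
  refine tprod_one_add_ne_zero_of_summable (fun n => ?_)
    (by simpa [hζ] using summable_norm_e2_mul_nat_add hτ b)
  simpa using one_add_mul_e2_ne_zero hτ hζ (h n)

lemma one_add_neg_one_pow_mul_e2_ne_zero (ε' : ℕ) {u : ℝ} (hu : Irrational u) :
    1 + (-1) ^ ε' * e2 u ≠ 0 := by
  intro h
  have h₂ : e2 ((2 * u : ℝ) : ℂ) = 1 := by
    calc e2 ((2 * u : ℝ) : ℂ) = ((-1) ^ ε' * e2 u) ^ 2 := by
          rw [mul_pow, ← pow_mul, mul_comm ε', pow_mul, neg_one_sq, one_pow, one_mul, sq,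
            ← e2_add]
          push_cast; ring_nf
      _ = 1 := by rw [eq_neg_of_add_eq_zero_right h, neg_one_sq]
  obtain ⟨k, hk⟩ := Complex.exp_eq_one_iff.mp h₂
  have h2u : ((2 * u : ℝ) : ℂ) = k := by
    apply mul_left_cancel₀ two_pi_I_ne_zero
    rw [hk]; ring
  exact (hu.natCast_mul two_ne_zero).ne_int k (by exact_mod_cast h2u)

lemma theta_ne_zero (ε ε' : ℕ) {τ : ℂ} (hτ : 0 < τ.im) {u : ℝ} (hu : Irrational u) :
    theta ε ε' u τ ≠ 0 := by
  have hζ : ∀ v : ℝ, ‖(-1) ^ ε' * e2 v‖ = 1 := fun v => by simp [norm_e2_ofReal]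
  have hfac : theta ε ε' u τ = e2 (u * ε / 2) * e2 (τ * ε / 8) *
      ∏' n : ℕ, ((1 + (-1) * e2 (τ * (n + (1 : ℝ)))) *
        (1 + (-1) ^ ε' * e2 u * e2 (τ * (n + ((1 + ε) / 2 : ℝ)))) *
        (1 + (-1) ^ ε' * e2 (-u : ℝ) * e2 (τ * (n + ((1 - ε) / 2 : ℝ))))) := by
    rw [theta]
    congr 1
    refine tprod_congr fun n => ?_
    push_cast
    ring_nf
  have hA := multipliable_one_add_mul_e2 hτ (ζ := -1) (by simp) 1
  have hB := multipliable_one_add_mul_e2 hτ (hζ u) ((1 + ε) / 2)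
  have hC := multipliable_one_add_mul_e2 hτ (hζ (-u)) ((1 - ε) / 2)
  rw [hfac, (hA.mul hB).tprod_mul hC, hA.tprod_mul hB]
  refine mul_ne_zero (mul_ne_zero (exp_ne_zero _) (exp_ne_zero _))
    (mul_ne_zero (mul_ne_zero ?_ ?_) ?_)
  · exact tprod_one_add_mul_e2_ne_zero hτ (by simp) fun n hn => absurd hn (by positivity)
  · exact tprod_one_add_mul_e2_ne_zero hτ (hζ u) fun _ _ =>
      one_add_neg_one_pow_mul_e2_ne_zero ε' hu
  · exact tprod_one_add_mul_e2_ne_zero hτ (hζ (-u)) fun _ _ =>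
      one_add_neg_one_pow_mul_e2_ne_zero ε' hu.neg

lemma hasSum_pow_natAbs {q : ℝ} (hq : |q| < 1) :
    HasSum (fun n : ℤ => q ^ n.natAbs) ((1 + q) / (1 - q)) := by
  have hq₁ : 1 - q ≠ 0 := by rw [abs_lt] at hq; linarith
  have hneg : HasSum (fun n : ℕ => q ^ (-(n + 1 : ℤ)).natAbs) (q * (1 - q)⁻¹) := by
    refine ((hasSum_geometric_of_abs_lt_one hq).mul_left q).congr_fun fun n => ?_
    rw [← pow_succ']; congr 1
  convert HasSum.of_nat_of_neg_add_one (f := fun n : ℤ => q ^ n.natAbs)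
    (by simpa using hasSum_geometric_of_abs_lt_one hq) hneg using 1
  field_simp

lemma exp_neg_pi_lt_one_third : Real.exp (-π) < 1 / 3 := by
  rw [Real.exp_neg, inv_lt_comm₀ (Real.exp_pos π) (by norm_num)]
  linarith [Real.add_one_le_exp π, Real.pi_gt_three]

lemma tsum_exp_sub_exp_pos {A α β : ℝ} (hA : 0 < A)
    (h : ∀ n : ℤ, (|n| + 1 : ℝ) ≤ 2 * (A * (n + β) ^ 2 - A * α ^ 2)) :
    0 < ∑' n : ℤ, (Real.exp (-(2 * π * (A * (n + α) ^ 2))) -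
      Real.exp (-(2 * π * (A * (n + β) ^ 2)))) := by
  set q := Real.exp (-π)
  set x₀ := Real.exp (-(2 * π * (A * α ^ 2)))
  have hq₀ : 0 < q := Real.exp_pos _
  have hq : q < 1 / 3 := exp_neg_pi_lt_one_third
  have hbound : HasSum (fun n : ℤ => x₀ * q * q ^ n.natAbs) (x₀ * q * ((1 + q) / (1 - q))) :=
    (hasSum_pow_natAbs (by rw [abs_lt]; constructor <;> linarith)).mul_left _
  have hy_le (n : ℤ) : Real.exp (-(2 * π * (A * (n + β) ^ 2))) ≤ x₀ * q * q ^ n.natAbs := by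
    rw [← Real.exp_add, ← Real.exp_nat_mul, ← Real.exp_add, Real.exp_le_exp, Nat.cast_natAbs,
      Int.cast_abs]
    have hn := h n
    rw [Int.cast_abs] at hn
    nlinarith [mul_le_mul_of_nonneg_left hn Real.pi_pos.le]
  have hys : Summable fun n : ℤ => Real.exp (-(2 * π * (A * (n + β) ^ 2))) :=
    .of_nonneg_of_le (fun _ => (Real.exp_pos _).le) hy_le hbound.summable
  have hxs : Summable fun n : ℤ => Real.exp (-(2 * π * (A * (n + α) ^ 2))) := by
    refine (HurwitzKernelBounds.summable_f_int 0 α (t := 2 * A) (by positivity)).congr fun n => ?_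
    simp only [HurwitzKernelBounds.f_int, pow_zero, one_mul]
    ring_nf
  have hy_lt : ∑' n : ℤ, Real.exp (-(2 * π * (A * (n + β) ^ 2))) < x₀ := by
    have hx₀ : 0 < x₀ := Real.exp_pos _
    have hq' : q * ((1 + q) / (1 - q)) < 1 := by
      rw [mul_div_assoc', div_lt_one (by linarith)]; nlinarith
    calc _ ≤ x₀ * q * ((1 + q) / (1 - q)) := hasSum_le hy_le hys.hasSum hbound
      _ < x₀ := by nlinarith
  have hx_ge : x₀ ≤ ∑' n : ℤ, Real.exp (-(2 * π * (A * (n + α) ^ 2))) := by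
    simpa [x₀] using hxs.le_tsum 0 (fun _ _ => (Real.exp_pos _).le)
  rw [hxs.tsum_sub hys]
  linarith

lemma abs_add_one_le_two_mul_mul_sub_mul_sub {p p' r s : ℤ} (hr : 0 < r) (hrp : r < p)
    (hs : 0 < s) (hsp : s < p') (n : ℤ) : |n| + 1 ≤ 2 * ((n * p - r) * (n * p' - s)) := by
  rcases lt_trichotomy n 0 with hn | rfl | hn
  · have h₁ : -n + 1 ≤ -n * p + r := by nlinarith
    have h₂ : 1 ≤ -n * p' + s := by nlinarith
    rw [abs_of_neg hn]
    nlinarith [mul_le_mul h₁ h₂ zero_le_one (by omega)]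
  · simp only [abs_zero, zero_add, zero_mul, zero_sub, mul_neg, neg_mul, neg_neg]
    nlinarith
  · have h₁ : n ≤ n * p - r := by nlinarith
    have h₂ : 1 ≤ n * p' - s := by nlinarith
    rw [abs_of_pos hn]
    nlinarith [mul_le_mul h₁ h₂ zero_le_one (by omega)]

lemma chiBPZ_I_ne_zero {p p' r s : ℤ} (hr : 0 < r) (hrp : r < p) (hs : 0 < s) (hsp : s < p') :
    chiBPZ p p' r s I ≠ 0 := by
  have hp : (p : ℝ) ≠ 0 := by exact_mod_cast (hr.trans hrp).ne'
  have hp' : (p' : ℝ) ≠ 0 := by exact_mod_cast (hs.trans hsp).ne'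
  have hpos := tsum_exp_sub_exp_pos (A := p * p') (α := ((r * p' - s * p : ℤ) : ℝ) / (2 * p * p'))
    (β := ((-r * p' - s * p : ℤ) : ℝ) / (2 * p * p'))
    (by have := hr.trans hrp; have := hs.trans hsp; positivity) fun n => by
      have hN : (p * p' : ℝ) * (n + ((-r * p' - s * p : ℤ) : ℝ) / (2 * p * p')) ^ 2
          - p * p' * (((r * p' - s * p : ℤ) : ℝ) / (2 * p * p')) ^ 2
          = ((n * p - r) * (n * p' - s) : ℤ) := by
        push_cast; field_simp; ring
      rw [hN]
      exact_mod_cast abs_add_one_le_two_mul_mul_sub_mul_sub hr hrp hs hsp n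
  rw [chiBPZ]
  refine mul_ne_zero (inv_ne_zero (dedekindEta_ne_zero (by simp))) ?_
  convert ofReal_ne_zero.mpr hpos.ne' using 2
  rw [ofReal_tsum]
  refine tsum_congr fun n => ?_
  rw [ofReal_sub, ← e2_I_mul_ofReal, ← e2_I_mul_ofReal]
  push_cast
  ring_nf

lemma hasDerivAt_cexp_ofReal_mul (w : ℂ) : HasDerivAt (fun u : ℝ => cexp (u * w)) w 0 := by
  simpa using (((hasDerivAt_id (0 : ℂ)).mul_const w).cexp).comp_ofReal

lemma linearIndependent_cexp_ofReal_mul :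
    LinearIndependent ℂ fun (w : ℂ) (u : ℝ) => cexp (u * w) := by
  let χ (w : ℂ) : Multiplicative ℝ →* ℂ :=
    { toFun := fun u => cexp (u.toAdd * w)
      map_one' := by simp
      map_mul' := fun u v => by simp [add_mul, Complex.exp_add] }
  have hχ : Function.Injective χ := fun w w' h => by
    have hfun : (fun u : ℝ => cexp (u * w)) = fun u : ℝ => cexp (u * w') :=
      funext fun u : ℝ => DFunLike.congr_fun h (Multiplicative.ofAdd u)
    exact (hasDerivAt_cexp_ofReal_mul w).unique (hfun ▸ hasDerivAt_cexp_ofReal_mul w')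
  exact (linearIndependent_monoidHom (Multiplicative ℝ) ℂ).comp χ hχ

lemma LinearIndependent.restrict_of_dense {ι X : Type*} [TopologicalSpace X] {v : ι → X → ℂ}
    (hv : LinearIndependent ℂ v) (hc : ∀ i, Continuous (v i)) {s : Set X} (hs : Dense s) :
    LinearIndependent ℂ fun i (x : s) => v i x := by
  rw [linearIndependent_iff'] at hv ⊢
  intro t c hsum
  refine hv t c (Continuous.ext_on hs ?_ continuous_const fun x hx => ?_)
  · rw [Finset.sum_fn]
    exact continuous_finsetSum _ fun i _ => (hc i).const_smul (c i)
  · simpa using congrFun hsum ⟨x, hx⟩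

lemma linearIndependent_of_apply_eq_mul_cexp {ι Y : Type*} {F : ι → Y → ℂ} (φ : ℝ → Y)
    {s : Set ℝ} (hs : Dense s) {W : ℝ → ℂ} (hW : ∀ u ∈ s, W u ≠ 0) {k w : ι → ℂ}
    (hk : ∀ i, k i ≠ 0) (hw : Function.Injective w)
    (hF : ∀ i, ∀ u ∈ s, F i (φ u) = k i * cexp (u * w i) * W u) : LinearIndependent ℂ F := by
  let R : (Y → ℂ) →ₗ[ℂ] s → ℂ :=
    LinearMap.mulLeft ℂ (fun u : s => (W u)⁻¹) ∘ₗ LinearMap.funLeft ℂ ℂ (φ ∘ Subtype.val)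
  refine .of_comp R ?_
  convert ((linearIndependent_cexp_ofReal_mul.comp w hw).restrict_of_dense
    (fun i => by fun_prop) hs).units_smul fun i => Units.mk0 (k i) (hk i) using 1
  ext i u
  simp only [R, LinearMap.coe_comp, Function.comp_apply, LinearMap.mulLeft_apply, Pi.mul_apply,
    LinearMap.funLeft_apply, hF i u u.2, Pi.smul_apply', Pi.smul_apply, Units.smul_mk0, smul_eq_mul]
  field_simp [hW u u.2]

theorem typical_characters_linearIndependent_general (p p' : ℤ)
    (r s : ℤ) (hK : (r, s) ∈ Kset p p')
    (ε ε' : ℕ) :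
    LinearIndependent ℂ (fun x : {x : ℂ // x.im ∉ SrsSet p p' r s} =>
      (fun z : UpperHalfPlane × ℂ × ℂ =>
        Tchar p p' ε ε' r s x.1 (z.1 : ℂ) z.2.1 z.2.2)) := by
  simp only [Kset, Finset.mem_filter, Finset.mem_product, Finset.mem_Icc] at hK
  obtain ⟨⟨⟨hr, hrp⟩, hs, hsp⟩, -⟩ := hK
  have ha : (p' : ℂ) / p ≠ 0 := div_ne_zero (by exact_mod_cast (by omega : p' ≠ 0))
    (by exact_mod_cast (by omega : p ≠ 0))
  refine linearIndependent_of_apply_eq_mul_cexp (fun u : ℝ => (UpperHalfPlane.I, (u : ℂ), 0))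
    dense_irrational (W := fun u => theta ε ε' u I / dedekindEta I ^ 2 * chiBPZ p p' r s I)
    (k := fun x => (-1) ^ (ε * ε') * e2 (I * (p' / p * (x.1 - I * ε / 2) ^ 2)))
    (w := fun x => 2 * π * I * (2 * I * (p' / p) * (x.1 - I * ε / 2)))
    (fun u hu => ?_) (fun x => ?_) (fun x y hxy => ?_) (fun x u _ => ?_)
  · exact mul_ne_zero (div_ne_zero (theta_ne_zero ε ε' (by simp) hu)
      (pow_ne_zero 2 (dedekindEta_ne_zero (by simp))))
      (chiBPZ_I_ne_zero (by omega) (by omega) (by omega) (by omega))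
  · exact mul_ne_zero (pow_ne_zero _ (by norm_num)) (Complex.exp_ne_zero _)
  · exact Subtype.ext (by simpa [two_pi_I_ne_zero, ha] using hxy)
  · simp only [Tchar, e2, UpperHalfPlane.coe_I, zero_mul, mul_zero, Complex.exp_zero, mul_one]
    ring_nf

/-- The typical character functions, for x ∈ ℝ + i(ℝ∖S_{r,s}), form a linearly
independent family of functions on ℍ × ℂ × ℂ. -/
theorem typical_characters_linearIndependent (p p' : ℤ) (hp : 2 ≤ p) (hp' : 2 ≤ p')
    (hco : IsCoprime p p') (r s : ℤ) (hK : (r, s) ∈ Kset p p')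
    (ε ε' : ℕ) (hε : ε ≤ 1) (hε' : ε' ≤ 1) :
    LinearIndependent ℂ (fun x : {x : ℂ // x.im ∉ SrsSet p p' r s} =>
      (fun z : UpperHalfPlane × ℂ × ℂ =>
        Tchar p p' ε ε' r s x.1 (z.1 : ℂ) z.2.1 z.2.2)) :=
  typical_characters_linearIndependent_general p p' r s hK ε ε'
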